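/- For a nontrivial 1-generated F-semilattice A generated by a ∈ A, the following are equivalent: (a) the quasivariety Q(A) is minimal (its only proper subquasivariety is the trivial one); (b) for every b ∈ A generating a non-singleton subalgebra B, there is an isomorphism A → B sending a to b; (c) A is isomorphic to each of its nontrivial 1-generated subalgebras; (d) each element of A other than the least element (if it exists) generates a subalgebra isomorphic to A. -/

import Mathlib

inductive SLTerm (F : Type) : Type where
  | var : SLTerm F
  | meet : SLTerm F → SLTerm F → SLTerm F
  | act : F → SLTerm F → SLTerm F

/-- Evaluation of a unary term at an element of an `F`-semilattice. -/
def SLTerm.eval {F A : Type} [SemilatticeInf A] [SMul F A] : SLTerm F → A → A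
  | .var, a => a
  | .meet s t, a => s.eval a ⊓ t.eval a
  | .act g t, a => g • t.eval a

inductive SLTermN (F : Type) : Type where
  | var : ℕ → SLTermN F
  | meet : SLTermN F → SLTermN F → SLTermN F
  | act : F → SLTermN F → SLTermN F

def SLTermN.eval {F A : Type} [SemilatticeInf A] [SMul F A] : SLTermN F → (ℕ → A) → A
  | .var n, v => v n
  | .meet s t, v => s.eval v ⊓ t.eval v
  | .act g t, v => g • t.eval v

def SatQI (F : Type) (A : Type) [SemilatticeInf A] [SMul F A]
    (prem : List (SLTermN F × SLTermN F)) (c : SLTermN F × SLTermN F) : Prop :=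
  ∀ v : ℕ → A, (∀ p ∈ prem, p.1.eval v = p.2.eval v) → c.1.eval v = c.2.eval v

/-- `B` belongs to the quasivariety generated by `A`. -/
def InQ (F : Type) (A B : Type) [SemilatticeInf A] [SMul F A]
    [SemilatticeInf B] [SMul F B] : Prop :=
  ∀ prem c, SatQI F A prem c → SatQI F B prem c

/-- `B` belongs to the variety generated by `A`. -/
def InV (F : Type) (A B : Type) [SemilatticeInf A] [SMul F A]
    [SemilatticeInf B] [SMul F B] : Prop :=
  ∀ s t : SLTermN F, (∀ v : ℕ → A, s.eval v = t.eval v) → ∀ v : ℕ → B, s.eval v = t.eval v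

def IsHom (F : Type) {A B : Type} [SemilatticeInf A] [SMul F A] [SemilatticeInf B] [SMul F B]
    (φ : A → B) : Prop :=
  (∀ x y : A, φ (x ⊓ y) = φ x ⊓ φ y) ∧ ∀ (g : F) (x : A), φ (g • x) = g • φ x

/-- The subuniverse of `A` generated by `a`. -/
def genSet (F : Type) {A : Type} [SemilatticeInf A] [SMul F A] (a : A) : Set A :=
  Set.range fun t : SLTerm F => t.eval a

/-- The quasivariety generated by `A` is a minimal quasivariety of `F`-semilattices. -/
def MinGen (F : Type) [CommGroup F] (A : Type) [SemilatticeInf A] [MulAction F A] : Prop :=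
  Nontrivial A ∧
    ∀ (B : Type) [SemilatticeInf B] [MulAction F B],
      (∀ (g : F) (x y : B), g • (x ⊓ y) = g • x ⊓ g • y) →
      InQ F A B → Nontrivial B → InQ F B A

/-!
Unary terms act on an `F`-semilattice as pairwise commuting endomorphisms. Hence in `A`,
generated by `a`, an equation `s a = t a` is an identity of `A`, and at most one element
generates a one-element subalgebra.

(a) → (b): the subalgebra `B` generated by `b` lies in `Q(A)`, so minimality gives `A ∈ Q(B)`;
thus every unary equation satisfied by `b` is satisfied by `a`, and `t a ↦ t b` is an isomorphism
of `A` onto `B`.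

(c) → (a): let `B ∈ Q(A)` be nontrivial. Writing an assignment in `A` as terms in `a` turns a
quasi-identity valid in `B` into a unary equation `P₁ x = P₂ x` that holds throughout `B`. If
`P₁ a ≠ P₂ a`, then by (c) every solution in `A` generates a one-element subalgebra, so
`P₁ x = P₂ x ∧ P₁ y = P₂ y → x = y` holds in `A`, hence in `B`, contradicting nontriviality of `B`.

(c) → (d): if `b` generates a one-element subalgebra and is not least, then some `b ⊓ c ≠ b`
generates a nontrivial one. An isomorphism of `A` onto it fixes `b` and lands below `b`, so `b` is
the top of `A`; then `a = b`, and `A` is trivial. Conversely a least element is fixed by `F`, so it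
generates a one-element subalgebra, which gives (d) → (c).
-/

class SMulInfDistrib (F A : Type) [SemilatticeInf A] [SMul F A] : Prop where
  smul_inf : ∀ (g : F) (x y : A), g • (x ⊓ y) = g • x ⊓ g • y

section Action

variable {F A : Type} [SemilatticeInf A]

theorem SMulInfDistrib.smul_mono [SMul F A] [SMulInfDistrib F A] (g : F) :
    Monotone fun x : A => g • x := fun x y h => by
  rw [← inf_eq_left, ← SMulInfDistrib.smul_inf, inf_eq_left.mpr h]

theorem IsBot.smul_eq [Group F] [MulAction F A] [SMulInfDistrib F A] {b : A} (hb : IsBot b)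
    (g : F) : g • b = b :=
  le_antisymm (by simpa using SMulInfDistrib.smul_mono g (hb (g⁻¹ • b))) (hb _)

end Action

namespace SLTerm

variable {F A : Type} [SemilatticeInf A]

theorem eval_inf [SMul F A] [SMulInfDistrib F A] (t : SLTerm F) (x y : A) :
    t.eval (x ⊓ y) = t.eval x ⊓ t.eval y := by
  induction t with
  | var => rfl
  | meet s t ihs iht => simp only [eval, ihs, iht, inf_inf_inf_comm]
  | act g t ih => simp only [eval, ih, SMulInfDistrib.smul_inf]

theorem eval_smul [CommMonoid F] [MulAction F A] [SMulInfDistrib F A] (t : SLTerm F) (g : F)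
    (x : A) : t.eval (g • x) = g • t.eval x := by
  induction t with
  | var => rfl
  | meet s t ihs iht => simp only [eval, ihs, iht, SMulInfDistrib.smul_inf]
  | act h t ih => simp only [eval, ih, smul_smul, mul_comm]

theorem eval_eval_comm [CommMonoid F] [MulAction F A] [SMulInfDistrib F A] (s t : SLTerm F)
    (x : A) : s.eval (t.eval x) = t.eval (s.eval x) := by
  induction s with
  | var => rfl
  | meet s₁ s₂ ih₁ ih₂ => simp only [eval, ih₁, ih₂, eval_inf]
  | act g s ih => simp only [eval, ih, eval_smul]

theorem eval_eq_of_eval_eq_of_mem_genSet [CommMonoid F] [MulAction F A] [SMulInfDistrib F A]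
    {s t : SLTerm F} {a x : A} (h : s.eval a = t.eval a) (hx : x ∈ genSet F a) :
    s.eval x = t.eval x := by
  obtain ⟨u, rfl⟩ := hx
  rw [eval_eval_comm s, eval_eval_comm t, h]

theorem exists_eval_le_smul [Monoid F] [MulAction F A] [SMulInfDistrib F A] (t : SLTerm F)
    (x : A) : ∃ g : F, t.eval x ≤ g • x := by
  induction t with
  | var => exact ⟨1, (one_smul F x).ge⟩
  | meet s t ih _ =>
    obtain ⟨g, hg⟩ := ih
    exact ⟨g, inf_le_left.trans hg⟩
  | act g t ih =>
    obtain ⟨h, hh⟩ := ih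
    exact ⟨g * h, by simpa only [eval, mul_smul] using SMulInfDistrib.smul_mono g hh⟩

theorem eval_eq_self_of_forall_smul_eq [SMul F A] {b : A} (hb : ∀ g : F, g • b = b)
    (t : SLTerm F) : t.eval b = b := by
  induction t with
  | var => rfl
  | meet s t ihs iht => simp only [eval, ihs, iht, inf_idem]
  | act g t ih => simp only [eval, ih, hb]

def inVar (n : ℕ) : SLTerm F → SLTermN F
  | .var => .var n
  | .meet s t => .meet (inVar n s) (inVar n t)
  | .act g t => .act g (inVar n t)

theorem eval_inVar [SMul F A] (n : ℕ) (t : SLTerm F) (v : ℕ → A) :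
    (t.inVar n).eval v = t.eval (v n) := by
  induction t with
  | var => rfl
  | meet s t ihs iht => simp only [inVar, SLTermN.eval, eval, ihs, iht]
  | act g t ih => simp only [inVar, SLTermN.eval, eval, ih]

end SLTerm

namespace SLTermN

variable {F A : Type} [SemilatticeInf A]

def subst (τ : ℕ → SLTerm F) : SLTermN F → SLTerm F
  | .var n => τ n
  | .meet s t => .meet (subst τ s) (subst τ t)
  | .act g t => .act g (subst τ t)

theorem eval_subst [SMul F A] (τ : ℕ → SLTerm F) (t : SLTermN F) (x : A) :
    (t.subst τ).eval x = t.eval fun n => (τ n).eval x := by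
  induction t with
  | var n => rfl
  | meet s t ihs iht => simp only [subst, eval, SLTerm.eval, ihs, iht]
  | act g t ih => simp only [subst, eval, SLTerm.eval, ih]

end SLTermN

namespace IsHom

variable {F A B : Type} [SemilatticeInf A] [SMul F A] [SemilatticeInf B] [SMul F B]
  {φ : A → B}

theorem map_eval (hφ : IsHom F φ) (t : SLTerm F) (x : A) : φ (t.eval x) = t.eval (φ x) := by
  induction t with
  | var => rfl
  | meet s t ihs iht => simp only [SLTerm.eval, hφ.1, ihs, iht]
  | act g t ih => simp only [SLTerm.eval, hφ.2, ih]

theorem map_evalN (hφ : IsHom F φ) (t : SLTermN F) (v : ℕ → A) :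
    φ (t.eval v) = t.eval (φ ∘ v) := by
  induction t with
  | var n => rfl
  | meet s t ihs iht => simp only [SLTermN.eval, hφ.1, ihs, iht]
  | act g t ih => simp only [SLTermN.eval, hφ.2, ih]

end IsHom

namespace InQ

variable {F A B : Type} [SemilatticeInf A] [SMul F A] [SemilatticeInf B] [SMul F B]

theorem of_injective_isHom {φ : B → A} (hinj : Function.Injective φ) (hφ : IsHom F φ) :
    InQ F A B := by
  intro prem c hsat v hv
  apply hinj
  rw [hφ.map_evalN, hφ.map_evalN]
  exact hsat (φ ∘ v) fun p hp => by rw [← hφ.map_evalN, ← hφ.map_evalN, hv p hp]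

theorem eval_eq (h : InQ F A B) {s t : SLTerm F} (hst : ∀ x : A, s.eval x = t.eval x) (y : B) :
    s.eval y = t.eval y := by
  simpa only [SLTerm.eval_inVar] using
    h [] (s.inVar 0, t.inVar 0) (fun v _ => by simpa only [SLTerm.eval_inVar] using hst (v 0))
      (fun _ => y) (by simp)

theorem eq_of_eval_eq (h : InQ F A B) {s t : SLTerm F}
    (hst : ∀ x₀ x₁ : A, s.eval x₀ = t.eval x₀ → s.eval x₁ = t.eval x₁ → x₀ = x₁) {y₀ y₁ : B}
    (h₀ : s.eval y₀ = t.eval y₀) (h₁ : s.eval y₁ = t.eval y₁) : y₀ = y₁ := by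
  have hsat : SatQI F A [(s.inVar 0, t.inVar 0), (s.inVar 1, t.inVar 1)] (.var 0, .var 1) :=
    fun v hv => by
      simp only [List.mem_cons, List.not_mem_nil, forall_eq_or_imp, SLTerm.eval_inVar] at hv
      exact hst (v 0) (v 1) hv.1 hv.2.1
  simpa [SLTermN.eval] using
    h _ _ hsat (fun n => if n = 0 then y₀ else y₁) (by simpa [SLTerm.eval_inVar] using ⟨h₀, h₁⟩)

end InQ

section GenSet

variable {F A : Type} [SemilatticeInf A]

theorem eval_mem_genSet [SMul F A] (t : SLTerm F) (b : A) : t.eval b ∈ genSet F b :=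
  ⟨t, rfl⟩

theorem mem_genSet_self [SMul F A] (b : A) : b ∈ genSet F b :=
  eval_mem_genSet (.var : SLTerm F) b

theorem inf_mem_genSet [SMul F A] {b x y : A} (hx : x ∈ genSet F b) (hy : y ∈ genSet F b) :
    x ⊓ y ∈ genSet F b := by
  obtain ⟨s, rfl⟩ := hx
  obtain ⟨t, rfl⟩ := hy
  exact eval_mem_genSet (s.meet t) b

theorem smul_mem_genSet [SMul F A] {b x : A} (g : F) (hx : x ∈ genSet F b) :
    g • x ∈ genSet F b := by
  obtain ⟨t, rfl⟩ := hx
  exact eval_mem_genSet (t.act g) b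

theorem not_exists_ne_mem_genSet_iff [SMul F A] {b : A} :
    ¬ (∃ x y : A, x ∈ genSet F b ∧ y ∈ genSet F b ∧ x ≠ y) ↔ ∀ t : SLTerm F, t.eval b = b := by
  refine ⟨fun h t => ?_, fun h => ?_⟩
  · by_contra ht
    exact h ⟨_, _, eval_mem_genSet t b, mem_genSet_self b, ht⟩
  · rintro ⟨_, _, ⟨s, rfl⟩, ⟨t, rfl⟩, hst⟩
    exact hst ((h s).trans (h t).symm)

theorem eq_of_forall_eval_eq_self [CommMonoid F] [MulAction F A] [SMulInfDistrib F A]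
    {a x y : A} (hx : ∀ t : SLTerm F, t.eval x = x) (hy : ∀ t : SLTerm F, t.eval y = y)
    (hxa : x ∈ genSet F a) (hya : y ∈ genSet F a) : x = y := by
  obtain ⟨s, rfl⟩ := hxa
  obtain ⟨t, rfl⟩ := hya
  calc s.eval a = t.eval (s.eval a) := (hx t).symm
    _ = s.eval (t.eval a) := (SLTerm.eval_eval_comm s t a).symm
    _ = t.eval a := hy s

instance [SMul F A] {b : A} : SemilatticeInf (genSet F b) :=
  Subtype.semilatticeInf fun _ _ => inf_mem_genSet

instance [SMul F A] {b : A} : SMul F (genSet F b) :=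
  ⟨fun g x => ⟨g • x, smul_mem_genSet g x.2⟩⟩

instance [Monoid F] [MulAction F A] {b : A} : MulAction F (genSet F b) :=
  Subtype.coe_injective.mulAction _ fun _ _ => rfl

instance [SMul F A] [SMulInfDistrib F A] {b : A} : SMulInfDistrib F (genSet F b) :=
  ⟨fun g x y => Subtype.ext (SMulInfDistrib.smul_inf g x.1 y.1)⟩

theorem isHom_subtype_val [SMul F A] {b : A} : IsHom F (Subtype.val : genSet F b → A) :=
  ⟨fun _ _ => rfl, fun _ _ => rfl⟩

end GenSet

section Characterization

variable {F A : Type} [CommGroup F] [SemilatticeInf A] [MulAction F A] [SMulInfDistrib F A]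

theorem exists_iso_genSet_of_eval_eq {a b : A} (hgen : ∀ x : A, ∃ t : SLTerm F, t.eval a = x)
    (h : ∀ s t : SLTerm F, s.eval b = t.eval b → s.eval a = t.eval a) :
    ∃ φ : A → A, Function.Injective φ ∧ Set.range φ = genSet F b ∧ IsHom F φ ∧ φ a = b := by
  choose τ hτ using hgen
  have hb : ∀ s t : SLTerm F, s.eval a = t.eval a → s.eval b = t.eval b := fun s t hst =>
    SLTerm.eval_eq_of_eval_eq_of_mem_genSet hst ⟨τ b, hτ b⟩
  refine ⟨fun x => (τ x).eval b, fun x y hxy => ?_, ?_, ⟨fun x y => ?_, fun g x => ?_⟩, ?_⟩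
  · rw [← hτ x, ← hτ y]
    exact h _ _ hxy
  · ext y
    constructor
    · rintro ⟨x, rfl⟩
      exact eval_mem_genSet _ b
    · rintro ⟨t, rfl⟩
      exact ⟨t.eval a, hb _ _ (hτ _)⟩
  · exact hb (τ (x ⊓ y)) ((τ x).meet (τ y)) (by simp only [SLTerm.eval, hτ])
  · exact hb (τ (g • x)) ((τ x).act g) (by simp only [SLTerm.eval, hτ])
  · exact hb (τ a) .var (hτ a)

theorem MinGen.exists_iso_genSet (hmin : MinGen F A) {a b : A}
    (hgen : ∀ x : A, ∃ t : SLTerm F, t.eval a = x)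
    (hb : ∃ x y : A, x ∈ genSet F b ∧ y ∈ genSet F b ∧ x ≠ y) :
    ∃ φ : A → A, Function.Injective φ ∧ Set.range φ = genSet F b ∧ IsHom F φ ∧ φ a = b := by
  obtain ⟨x, y, hx, hy, hxy⟩ := hb
  have hnt : Nontrivial (genSet F b) :=
    ⟨⟨x, hx⟩, ⟨y, hy⟩, fun h => hxy (congrArg Subtype.val h)⟩
  have hBA : InQ F (genSet F b) A := hmin.2 _ SMulInfDistrib.smul_inf
    (InQ.of_injective_isHom Subtype.val_injective isHom_subtype_val) hnt
  refine exists_iso_genSet_of_eval_eq hgen fun s t hst => hBA.eval_eq (fun z => ?_) a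
  apply Subtype.val_injective
  rw [isHom_subtype_val.map_eval, isHom_subtype_val.map_eval]
  exact SLTerm.eval_eq_of_eval_eq_of_mem_genSet hst z.2

theorem not_isBot_of_exists_ne_mem_genSet {b : A}
    (hb : ∃ x y : A, x ∈ genSet F b ∧ y ∈ genSet F b ∧ x ≠ y) : ¬ IsBot b := fun hbot =>
  not_exists_ne_mem_genSet_iff.mpr (SLTerm.eval_eq_self_of_forall_smul_eq hbot.smul_eq) hb

theorem eq_of_isTop_of_forall_eval_eq_self {a b : A}
    (hgen : ∀ x : A, ∃ t : SLTerm F, t.eval a = x) (hb : ∀ t : SLTerm F, t.eval b = b)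
    (htop : IsTop b) (x : A) : x = b := by
  obtain ⟨β, hβ⟩ := hgen b
  obtain ⟨g, hg⟩ := β.exists_eval_le_smul a
  have hga : g • a = b := le_antisymm (htop _) (hβ ▸ hg)
  have hab : a = b := by
    rw [← inv_smul_smul g a, hga]
    exact hb (.act g⁻¹ .var)
  obtain ⟨t, rfl⟩ := hgen x
  rw [hab, hb]

theorem exists_ne_mem_genSet_of_not_isBot [Nontrivial A] {a : A}
    (hgen : ∀ x : A, ∃ t : SLTerm F, t.eval a = x)
    (hiso : ∀ b : A, (∃ x y : A, x ∈ genSet F b ∧ y ∈ genSet F b ∧ x ≠ y) →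
      ∃ φ : A → A, Function.Injective φ ∧ Set.range φ = genSet F b ∧ IsHom F φ)
    {b : A} (hbot : ¬ IsBot b) : ∃ x y : A, x ∈ genSet F b ∧ y ∈ genSet F b ∧ x ≠ y := by
  by_contra hfix
  rw [not_exists_ne_mem_genSet_iff] at hfix
  refine hbot fun c => ?_
  by_cases hbc : ∃ x y : A, x ∈ genSet F (b ⊓ c) ∧ y ∈ genSet F (b ⊓ c) ∧ x ≠ y
  · obtain ⟨φ, hinj, hrange, hhom⟩ := hiso _ hbc
    have hφb : φ b = b := eq_of_forall_eval_eq_self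
      (fun t => by rw [← hhom.map_eval, hfix]) hfix (hgen _) (hgen _)
    have hle : ∀ v, φ v ≤ b := fun v => by
      obtain ⟨t, ht : t.eval (b ⊓ c) = φ v⟩ : φ v ∈ genSet F (b ⊓ c) :=
        hrange ▸ Set.mem_range_self v
      rw [← ht, SLTerm.eval_inf, hfix]
      exact inf_le_left
    have htop : IsTop b := fun v =>
      inf_eq_left.mp (hinj (by rw [hhom.1, hφb, inf_eq_left.mpr (hle v)]))
    obtain ⟨x, hx⟩ := exists_ne b
    exact (hx (eq_of_isTop_of_forall_eval_eq_self hgen hfix htop x)).elim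
  · exact inf_eq_left.mp (eq_of_forall_eval_eq_self
      (not_exists_ne_mem_genSet_iff.mp hbc) hfix (hgen _) (hgen _))

theorem forall_eval_eq_self_of_eval_eq {a : A}
    (hiso : ∀ b : A, (∃ x y : A, x ∈ genSet F b ∧ y ∈ genSet F b ∧ x ≠ y) →
      ∃ φ : A → A, Function.Injective φ ∧ Set.range φ = genSet F b ∧ IsHom F φ)
    {s t : SLTerm F} (hne : s.eval a ≠ t.eval a) {x : A} (hx : s.eval x = t.eval x)
    (u : SLTerm F) : u.eval x = x := by
  by_contra hu
  obtain ⟨ψ, hinj, hrange, hhom⟩ :=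
    hiso x ⟨_, _, eval_mem_genSet u x, mem_genSet_self x, hu⟩
  obtain ⟨w, hw : w.eval x = ψ a⟩ : ψ a ∈ genSet F x := hrange ▸ Set.mem_range_self a
  refine hne (hinj ?_)
  rw [hhom.map_eval, hhom.map_eval, ← hw]
  simp only [SLTerm.eval_eval_comm s w, SLTerm.eval_eval_comm t w, hx]

theorem minGen_of_forall_iso_genSet [Nontrivial A] {a : A}
    (hgen : ∀ x : A, ∃ t : SLTerm F, t.eval a = x)
    (hiso : ∀ b : A, (∃ x y : A, x ∈ genSet F b ∧ y ∈ genSet F b ∧ x ≠ y) →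
      ∃ φ : A → A, Function.Injective φ ∧ Set.range φ = genSet F b ∧ IsHom F φ) :
    MinGen F A := by
  refine ⟨inferInstance, fun B _ _ _ hAB hntB prem c hsat v hv => ?_⟩
  choose σ hσ using fun n => hgen (v n)
  obtain rfl : (fun n => (σ n).eval a) = v := funext hσ
  simp only [← SLTermN.eval_subst] at hv ⊢
  have hB : ∀ y : B, (c.1.subst σ).eval y = (c.2.subst σ).eval y := fun y => by
    simpa only [SLTermN.eval_subst] using hsat (fun n => (σ n).eval y) fun p hp => by
      simpa only [SLTermN.eval_subst] using hAB.eval_eq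
        (fun x => SLTerm.eval_eq_of_eval_eq_of_mem_genSet (hv p hp) (hgen x)) y
  by_contra hne
  obtain ⟨y₀, y₁, hy⟩ := hntB
  exact hy (hAB.eq_of_eval_eq (fun x₀ x₁ h₀ h₁ => eq_of_forall_eval_eq_self
    (forall_eval_eq_self_of_eval_eq hiso hne h₀) (forall_eval_eq_self_of_eval_eq hiso hne h₁)
    (hgen x₀) (hgen x₁)) (hB y₀) (hB y₁))

end Characterization

/-- Characterization of the `1`-generated `F`-semilattices generating a minimal
quasivariety: (a) ↔ (b) ↔ (c) ↔ (d). -/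
theorem stmt_10 (F : Type) [CommGroup F] (A : Type) [SemilatticeInf A] [MulAction F A]
    (hA : ∀ (g : F) (x y : A), g • (x ⊓ y) = g • x ⊓ g • y)
    (hnt : Nontrivial A)
    (a : A) (hgen : ∀ x : A, ∃ t : SLTerm F, t.eval a = x) :
    (MinGen F A ↔
      ∀ b : A, (∃ x y : A, x ∈ genSet F b ∧ y ∈ genSet F b ∧ x ≠ y) →
        ∃ φ : A → A, Function.Injective φ ∧ Set.range φ = genSet F b ∧ IsHom F φ ∧ φ a = b) ∧
    (MinGen F A ↔
      ∀ b : A, (∃ x y : A, x ∈ genSet F b ∧ y ∈ genSet F b ∧ x ≠ y) →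
        ∃ φ : A → A, Function.Injective φ ∧ Set.range φ = genSet F b ∧ IsHom F φ) ∧
    (MinGen F A ↔
      ∀ b : A, ¬ IsBot b →
        ∃ φ : A → A, Function.Injective φ ∧ Set.range φ = genSet F b ∧ IsHom F φ) := by
  have : SMulInfDistrib F A := ⟨hA⟩
  have hca := minGen_of_forall_iso_genSet (F := F) hgen
  have hac : MinGen F A → ∀ b : A, (∃ x y : A, x ∈ genSet F b ∧ y ∈ genSet F b ∧ x ≠ y) →
      ∃ φ : A → A, Function.Injective φ ∧ Set.range φ = genSet F b ∧ IsHom F φ :=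
    fun hmin _ hb =>
      (hmin.exists_iso_genSet hgen hb).imp fun _ hφ => ⟨hφ.1, hφ.2.1, hφ.2.2.1⟩
  refine ⟨⟨fun hmin _ => hmin.exists_iso_genSet hgen, fun hb => hca fun b hb' => ?_⟩,
    ⟨hac, hca⟩, ⟨fun hmin b hbot => hac hmin b ?_, fun hd => hca fun b hb => ?_⟩⟩
  · exact (hb b hb').imp fun _ hφ => ⟨hφ.1, hφ.2.1, hφ.2.2.1⟩
  · exact exists_ne_mem_genSet_of_not_isBot hgen (hac hmin) hbot
  · exact hd b (not_isBot_of_exists_ne_mem_genSet hb)
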